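/- For a row stochastic matrix P = I − εL with ε > 0, where L is the Kirchhoff matrix of a weighted digraph Γ, the Cesàro limit P^∞ = lim_{m→∞} (1/m) Σ_{i=1}^m P^i exists and equals the normalized matrix of maximum out-forests J̄ of Γ (Markov chain tree theorem). -/

import Mathlib

open Finset

variable {n : ℕ}

/-- Kirchhoff (Laplacian) matrix of the weighted digraph whose arc `(j, i)`
has weight `a i j` (so `a i j` is the weight with which agent `i` accounts for `j`). -/
noncomputable def kirchhoff (a : Matrix (Fin n) (Fin n) ℝ) : Matrix (Fin n) (Fin n) ℝ :=
  Matrix.of fun i j => if i = j then ∑ k ∈ Finset.univ.erase i, a i k else -a i j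

/-- `F` is a spanning diverging forest (out-forest) of the digraph with arcs
`u → v` present iff `a v u > 0`: every arc of `F` is an arc of the digraph,
every vertex has in-degree at most one in `F`, and `F` has no directed cycles
(equivalently, no infinite directed walk). -/
def IsOutForest (a : Matrix (Fin n) (Fin n) ℝ) (F : Finset (Fin n × Fin n)) : Prop :=
  (∀ e ∈ F, 0 < a e.2 e.1) ∧
  (∀ u u' v : Fin n, (u, v) ∈ F → (u', v) ∈ F → u = u') ∧
  ¬ ∃ f : ℕ → Fin n, ∀ k, (f k, f (k + 1)) ∈ F

/-- Number of arcs of a maximum out-forest. -/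
noncomputable def maxForestSize (a : Matrix (Fin n) (Fin n) ℝ) : ℕ :=
  sSup {k | ∃ F, IsOutForest a F ∧ F.card = k}

/-- The out-forest dimension: the number of trees in any maximum out-forest. -/
noncomputable def outForestDim (a : Matrix (Fin n) (Fin n) ℝ) : ℕ :=
  n - maxForestSize a

open Classical in
/-- The set of maximum out-forests. -/
noncomputable def maxForests (a : Matrix (Fin n) (Fin n) ℝ) :
    Finset (Finset (Fin n × Fin n)) :=
  Finset.univ.filter fun F => IsOutForest a F ∧ F.card = maxForestSize a

/-- The weight of a forest: the product of its arc weights. -/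
def forestWeight (a : Matrix (Fin n) (Fin n) ℝ) (F : Finset (Fin n × Fin n)) : ℝ :=
  ∏ e ∈ F, a e.2 e.1

/-- In forest `F`, vertex `i` belongs to the tree diverging from (rooted at) `j`. -/
def InTreeRootedAt (F : Finset (Fin n × Fin n)) (j i : Fin n) : Prop :=
  (∀ u, (u, j) ∉ F) ∧ Relation.ReflTransGen (fun x y => (x, y) ∈ F) j i

open Classical in
/-- The normalized matrix of maximum out-forests. -/
noncomputable def barJ (a : Matrix (Fin n) (Fin n) ℝ) : Matrix (Fin n) (Fin n) ℝ :=
  Matrix.of fun i j =>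
    (∑ F ∈ (maxForests a).filter (fun F => InTreeRootedAt F j i), forestWeight a F) /
    (∑ F ∈ maxForests a, forestWeight a F)

/-- Reachability by directed paths (arc `u → v` present iff `a v u > 0`). -/
def Reach (a : Matrix (Fin n) (Fin n) ℝ) (u v : Fin n) : Prop :=
  Relation.ReflTransGen (fun x y => 0 < a y x) u v

/-- The strong component (bicomponent) of vertex `v`. -/
def strongClass (a : Matrix (Fin n) (Fin n) ℝ) (v : Fin n) : Set (Fin n) :=
  {u | Reach a u v ∧ Reach a v u}

/-- The set of strong components. -/
def strongClasses (a : Matrix (Fin n) (Fin n) ℝ) : Set (Set (Fin n)) :=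
  {S | ∃ v, S = strongClass a v}

/-- Basis bicomponents: strong components with no arcs entering from outside. -/
def basisClasses (a : Matrix (Fin n) (Fin n) ℝ) : Set (Set (Fin n)) :=
  {S | (∃ v, S = strongClass a v) ∧ ∀ u v, u ∉ S → v ∈ S → ¬ 0 < a v u}

/-- Weak reachability (underlying undirected graph). -/
def WeakReach (a : Matrix (Fin n) (Fin n) ℝ) (u v : Fin n) : Prop :=
  Relation.ReflTransGen (fun x y => 0 < a y x ∨ 0 < a x y) u v

/-- The set of weak components. -/
def weakClasses (a : Matrix (Fin n) (Fin n) ℝ) : Set (Set (Fin n)) :=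
  {S | ∃ v, S = {u | WeakReach a u v}}

/-!
Write `J_k = ∑_{|F| = k} w(F) T_F` and `σ_k = ∑_{|F| = k} w(F)`, the sums running over the
out-forests `F` with `k` arcs, where `w(F)` is the product of the arc weights and `T_F x j = 1`
exactly when `x` lies in the tree of `F` rooted at `j`. Inserting an arc `(p, i)` into a forest
rooted at `i` matches forests with `k` arcs, together with a new parent for `i`, with the forests
with `k + 1` arcs in which `i` has a parent; counting with this bijection gives the forest
recursion `J_{k+1} + L J_k = σ_{k+1} I`. At the maximal size `ν` of a forest `J_{ν+1} = 0` and
`σ_{ν+1} = 0`, so `L J̄ = 0`, and the step `k = ν - 1` writes `I - J̄ = L C`.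

Hence `P J̄ = J̄` and `∑_{t=1}^m P^t - m J̄ = ∑_{t=1}^m P^t (I - P) ε⁻¹ C = ε⁻¹ (P - P^{m+1}) C`,
which stays bounded because the powers of the stochastic matrix `P` do; dividing by `m` gives
the Cesàro limit `J̄`.
-/

theorem sum_sum_mul_mul_sub_eq_zero {ι R : Type*} [CommRing R] (s : Finset ι) (f g : ι → R) :
    ∑ x ∈ s, ∑ y ∈ s, f x * f y * (g x - g y) = 0 := by
  simp only [mul_sub, sum_sub_distrib]
  rw [sub_eq_zero, sum_comm]
  exact sum_congr rfl fun x _ => sum_congr rfl fun y _ => by ring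

section Cesaro

open Filter Topology

theorem sum_range_pow_succ_eq_nsmul_add {R : Type*} [Ring R] {P Q C : R} (hPQ : P * Q = Q)
    (hC : 1 - Q = (1 - P) * C) (m : ℕ) :
    ∑ t ∈ range m, P ^ (t + 1) = m • Q + P * (1 - P ^ m) * C := by
  have hPtQ : ∀ t, P ^ t * Q = Q := fun t => by
    induction t with
    | zero => rw [pow_zero, one_mul]
    | succ t ih => rw [pow_succ, mul_assoc, hPQ, ih]
  calc ∑ t ∈ range m, P ^ (t + 1)
      = ∑ t ∈ range m, P ^ (t + 1) * Q + (∑ t ∈ range m, P ^ (t + 1)) * (1 - Q) := by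
        rw [sum_mul, ← sum_add_distrib]
        simp only [mul_sub, mul_one, add_sub_cancel]
    _ = m • Q + P * (1 - P ^ m) * C := by
        simp_rw [hPtQ, sum_const, card_range, hC, pow_succ', ← mul_sum, ← mul_assoc, mul_assoc P,
          geom_sum_mul_neg]

theorem tendsto_cesaro_pow_of_mul_eq {A : Type*} [NormedRing A] [NormedAlgebra ℝ A]
    {P Q C : A} {B : ℝ} (hB : ∀ t, ‖P ^ t‖ ≤ B) (hPQ : P * Q = Q) (hC : 1 - Q = (1 - P) * C) :
    Tendsto (fun m : ℕ => (m : ℝ)⁻¹ • ∑ t ∈ range m, P ^ (t + 1)) atTop (𝓝 Q) := by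
  have hrem : Tendsto (fun m : ℕ => (m : ℝ)⁻¹ • (P * (1 - P ^ m) * C)) atTop (𝓝 0) := by
    refine squeeze_zero_norm (fun m => ?_)
      (tendsto_const_div_atTop_nhds_zero_nat (‖P‖ * (‖(1 : A)‖ + B) * ‖C‖))
    rw [norm_smul, norm_inv, RCLike.norm_natCast, div_eq_inv_mul]
    gcongr
    refine (norm_mul_le _ _).trans (mul_le_mul_of_nonneg_right ?_ (norm_nonneg _))
    exact (norm_mul_le _ _).trans (by gcongr; exact (norm_sub_le _ _).trans (by gcongr; exact hB m))
  have hlim := (tendsto_const_nhds (x := Q)).add hrem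
  rw [add_zero] at hlim
  refine hlim.congr' ?_
  filter_upwards [eventually_ge_atTop 1] with m hm
  rw [sum_range_pow_succ_eq_nsmul_add hPQ hC, smul_add, ← Nat.cast_smul_eq_nsmul ℝ,
    inv_smul_smul₀ (by positivity)]

attribute [local instance] Matrix.linftyOpNormedRing Matrix.linftyOpNormedAlgebra

variable {ι : Type*} [Fintype ι] [DecidableEq ι]

theorem Matrix.linfty_opNorm_le_one_of_mem_rowStochastic {M : Matrix ι ι ℝ}
    (hM : M ∈ Matrix.rowStochastic ℝ ι) : ‖M‖ ≤ 1 := by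
  rw [Matrix.linfty_opNorm_def, NNReal.coe_le_one, Finset.sup_le_iff]
  intro i _
  rw [← NNReal.coe_le_one, NNReal.coe_sum]
  simp only [coe_nnnorm, Real.norm_eq_abs, abs_of_nonneg (Matrix.nonneg_of_mem_rowStochastic hM),
    Matrix.sum_row_of_mem_rowStochastic hM, le_refl]

theorem tendsto_cesaro_pow_of_mem_rowStochastic {P Q C : Matrix ι ι ℝ}
    (hP : P ∈ Matrix.rowStochastic ℝ ι) (hPQ : P * Q = Q) (hC : 1 - Q = (1 - P) * C) :
    Tendsto (fun m : ℕ => (m : ℝ)⁻¹ • ∑ t ∈ range m, P ^ (t + 1)) atTop (𝓝 Q) :=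
  tendsto_cesaro_pow_of_mul_eq
    (fun t => Matrix.linfty_opNorm_le_one_of_mem_rowStochastic (pow_mem hP t)) hPQ hC

end Cesaro

section Kirchhoff

variable {a : Matrix (Fin n) (Fin n) ℝ}

theorem kirchhoff_mul_apply (a M : Matrix (Fin n) (Fin n) ℝ) (i j : Fin n) :
    (kirchhoff a * M) i j = ∑ p ∈ univ.erase i, a i p * (M i j - M p j) := by
  rw [Matrix.mul_apply, ← add_sum_erase _ _ (mem_univ i)]
  have hoff : ∀ p ∈ univ.erase i, kirchhoff a i p * M p j = -(a i p * M p j) := fun p hp => by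
    rw [kirchhoff, Matrix.of_apply, if_neg (ne_of_mem_erase hp).symm, neg_mul]
  rw [sum_congr rfl hoff, sum_neg_distrib, kirchhoff, Matrix.of_apply, if_pos rfl, sum_mul,
    ← sub_eq_add_neg, ← sum_sub_distrib]
  simp only [mul_sub]

theorem kirchhoff_mulVec_one (a : Matrix (Fin n) (Fin n) ℝ) : (kirchhoff a).mulVec 1 = 0 := by
  ext i
  have h := kirchhoff_mul_apply a (Matrix.of fun _ _ => 1) i i
  simp only [Matrix.mul_apply, Matrix.of_apply, sub_self, mul_zero, sum_const_zero] at h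
  simpa [Matrix.mulVec, dotProduct] using h

theorem one_sub_smul_kirchhoff_mem_rowStochastic (hnn : ∀ i j, 0 ≤ a i j) {ε : ℝ} (hε : 0 ≤ ε)
    (hεa : ∀ i, ε * ∑ j ∈ univ.erase i, a i j ≤ 1) :
    1 - ε • kirchhoff a ∈ Matrix.rowStochastic ℝ (Fin n) := by
  refine Matrix.mem_rowStochastic.mpr ⟨fun i j => ?_, ?_⟩
  · by_cases h : i = j
    · subst h
      simpa [kirchhoff] using hεa i
    · simpa [kirchhoff, h] using mul_nonneg hε (hnn i j)
  · rw [Matrix.sub_mulVec, Matrix.smul_mulVec, kirchhoff_mulVec_one, smul_zero, sub_zero,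
      Matrix.one_mulVec]

end Kirchhoff

section Forest

variable {a : Matrix (Fin n) (Fin n) ℝ} {F G : Finset (Fin n × Fin n)} {i j p x y : Fin n}

def Reaches (F : Finset (Fin n × Fin n)) : Fin n → Fin n → Prop :=
  Relation.ReflTransGen fun u v => (u, v) ∈ F

def IsRoot (F : Finset (Fin n × Fin n)) (v : Fin n) : Prop :=
  ∀ u, (u, v) ∉ F

def IsAcyclic (F : Finset (Fin n × Fin n)) : Prop :=
  ∀ u v, (u, v) ∈ F → ¬ Reaches F v u

theorem inTreeRootedAt_iff : InTreeRootedAt F j x ↔ IsRoot F j ∧ Reaches F j x :=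
  Iff.rfl

theorem Reaches.mono (h : F ⊆ G) (hxy : Reaches F x y) : Reaches G x y :=
  Relation.ReflTransGen.mono (fun _ _ e => h e) _ _ hxy

theorem Reaches.eq_of_isRoot (hxy : Reaches F x y) (hy : IsRoot F y) : x = y := by
  rcases Relation.ReflTransGen.cases_tail hxy with rfl | ⟨w, -, hw⟩
  · rfl
  · exact absurd hw (hy w)

theorem isRoot_insert_iff : IsRoot (insert (p, i) F) j ↔ j ≠ i ∧ IsRoot F j := by
  simp only [IsRoot, mem_insert, Prod.ext_iff, not_or, forall_and]
  constructor
  · rintro ⟨h, hF⟩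
    exact ⟨fun hji => h p ⟨rfl, hji⟩, hF⟩
  · rintro ⟨hji, hF⟩
    exact ⟨fun _ h => hji h.2, hF⟩

/-- A walk in `insert (p, i) F` either avoids the new arc, or can be cut at its first and at
its last use of it. -/
theorem reaches_insert_iff :
    Reaches (insert (p, i) F) x y ↔ Reaches F x y ∨ Reaches F x p ∧ Reaches F i y := by
  constructor
  · intro h
    induction h with
    | refl => exact .inl .refl
    | @tail w v _ hwv ih =>
      rcases mem_insert.mp hwv with he | he
      · obtain ⟨rfl, rfl⟩ := Prod.ext_iff.mp he
        exact .inr ⟨ih.elim id And.left, .refl⟩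
      · exact ih.imp (·.tail he) (And.imp_right (·.tail he))
  · rintro (h | ⟨hxp, hiy⟩)
    · exact h.mono (subset_insert _ _)
    · exact ((hxp.mono (subset_insert _ _)).tail (mem_insert_self _ _)).trans
        (hiy.mono (subset_insert _ _))

theorem reaches_insert_iff_of_not_reaches (hip : ¬ Reaches F i p) :
    Reaches (insert (p, i) F) i x ↔ Reaches F i x := by
  simp [reaches_insert_iff, hip]

theorem IsAcyclic.insert (hF : IsAcyclic F) (hip : ¬ Reaches F i p) :
    IsAcyclic (insert (p, i) F) := by
  intro u v huv hvu
  rcases mem_insert.mp huv with he | he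
  · obtain ⟨rfl, rfl⟩ := Prod.ext_iff.mp he
    exact hip ((reaches_insert_iff_of_not_reaches hip).mp hvu)
  · rcases reaches_insert_iff.mp hvu with h | ⟨hvp, hiu⟩
    · exact hF u v he h
    · exact hip (hiu.trans (Relation.ReflTransGen.head he hvp))

theorem isAcyclic_iff_not_exists_walk :
    IsAcyclic F ↔ ¬ ∃ f : ℕ → Fin n, ∀ k, (f k, f (k + 1)) ∈ F := by
  let child : Fin n → Fin n → Prop := fun v u => (u, v) ∈ F
  have hcycle : IsAcyclic F ↔ ∀ x, ¬ Relation.TransGen child x x := by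
    simp only [child, Relation.transGen_swap (r := fun u v => (u, v) ∈ F),
      Relation.TransGen.head'_iff, IsAcyclic, Reaches, not_exists, not_and]
  have hwalk : WellFounded child ↔ ¬ ∃ f : ℕ → Fin n, ∀ k, (f k, f (k + 1)) ∈ F := by
    rw [wellFounded_iff_isEmpty_descending_chain, isEmpty_subtype, not_exists]
  rw [hcycle, ← hwalk]
  constructor
  · intro h
    have : IsTrans (Fin n) (Relation.TransGen child) := ⟨fun _ _ _ => .trans⟩
    have : Std.Irrefl (Relation.TransGen child) := ⟨h⟩
    exact Subrelation.wf Relation.TransGen.single (Finite.wellFounded_of_trans_of_irrefl _)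
  · exact fun h => h.transGen.irrefl.irrefl

theorem IsOutForest.isAcyclic (hF : IsOutForest a F) : IsAcyclic F :=
  isAcyclic_iff_not_exists_walk.mpr hF.2.2

theorem IsOutForest.mono (hG : IsOutForest a G) (h : F ⊆ G) : IsOutForest a F :=
  ⟨fun e he => hG.1 e (h he), fun u u' v hu hu' => hG.2.1 u u' v (h hu) (h hu'),
    fun ⟨f, hf⟩ => hG.2.2 ⟨f, fun k => h (hf k)⟩⟩

theorem IsOutForest.insert (hF : IsOutForest a F) (hap : 0 < a i p) (hi : IsRoot F i)
    (hip : ¬ Reaches F i p) : IsOutForest a (insert (p, i) F) := by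
  refine ⟨?_, ?_, isAcyclic_iff_not_exists_walk.mp (hF.isAcyclic.insert hip)⟩
  · simpa [hap] using hF.1
  · intro u u' v hu hu'
    simp only [mem_insert, Prod.mk.injEq] at hu hu'
    rcases hu with ⟨rfl, rfl⟩ | hu
    · rcases hu' with ⟨rfl, -⟩ | hu'
      · rfl
      · exact absurd hu' (hi u')
    · rcases hu' with ⟨rfl, rfl⟩ | hu'
      · exact absurd hu (hi u)
      · exact hF.2.1 u u' v hu hu'

theorem IsOutForest.reaches_total (hF : IsOutForest a F) (hx : Reaches F x p)
    (hy : Reaches F y p) : Reaches F x y ∨ Reaches F y x := by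
  induction hx generalizing y with
  | refl => exact .inr hy
  | @tail w v _ hwv ih =>
    rcases Relation.ReflTransGen.cases_tail hy with rfl | ⟨w', hyw', hw'v⟩
    · exact .inl (Relation.ReflTransGen.tail ‹_› hwv)
    · exact ih (hF.2.1 w' w v hw'v hwv ▸ hyw')

theorem IsOutForest.inTreeRootedAt_iff_of_reaches (hF : IsOutForest a F) (hix : Reaches F i x) :
    InTreeRootedAt F j x ↔ InTreeRootedAt F j i := by
  refine ⟨fun ⟨hj, hjx⟩ => ⟨hj, ?_⟩, fun ⟨hj, hji⟩ => ⟨hj, hji.trans hix⟩⟩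
  rcases hF.reaches_total hjx hix with h | h
  · exact h
  · exact Reaches.eq_of_isRoot h hj ▸ .refl

theorem inTreeRootedAt_iff_eq_of_isRoot (hi : IsRoot F i) : InTreeRootedAt F j i ↔ j = i :=
  ⟨fun ⟨_, hji⟩ => Reaches.eq_of_isRoot hji hi, by rintro rfl; exact ⟨hi, .refl⟩⟩

theorem inTreeRootedAt_insert_self (hi : IsRoot F i) (hip : ¬ Reaches F i p) :
    InTreeRootedAt (insert (p, i) F) j i ↔ InTreeRootedAt F j p := by
  simp only [inTreeRootedAt_iff, isRoot_insert_iff, reaches_insert_iff]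
  constructor
  · rintro ⟨⟨hji, hj⟩, hreach | ⟨hjp, -⟩⟩
    · exact absurd (hreach.eq_of_isRoot hi) hji
    · exact ⟨hj, hjp⟩
  · rintro ⟨hj, hjp⟩
    refine ⟨⟨?_, hj⟩, .inr ⟨hjp, .refl⟩⟩
    rintro rfl
    exact hip hjp

theorem inTreeRootedAt_insert_of_not_reaches (hix : ¬ Reaches F i x) :
    InTreeRootedAt (insert (p, i) F) j x ↔ InTreeRootedAt F j x := by
  simp only [inTreeRootedAt_iff, isRoot_insert_iff, reaches_insert_iff, hix, and_false, or_false]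
  constructor
  · exact fun ⟨⟨_, hj⟩, hjx⟩ => ⟨hj, hjx⟩
  · rintro ⟨hj, hjx⟩
    refine ⟨⟨?_, hj⟩, hjx⟩
    rintro rfl
    exact hix hjx

end Forest

section Counting

variable {a : Matrix (Fin n) (Fin n) ℝ} {F G : Finset (Fin n × Fin n)} {i p : Fin n} {k : ℕ}

open Classical in
noncomputable def forestsOfCard (a : Matrix (Fin n) (Fin n) ℝ) (k : ℕ) :
    Finset (Finset (Fin n × Fin n)) :=
  univ.filter fun F => IsOutForest a F ∧ F.card = k

open Classical in
/-- For a root `i` of the forest `F`, these are exactly the `p` for which `insert (p, i) F` is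
again a forest. -/
noncomputable def parentCandidates (a : Matrix (Fin n) (Fin n) ℝ) (F : Finset (Fin n × Fin n))
    (i : Fin n) : Finset (Fin n) :=
  univ.filter fun p => 0 < a i p ∧ ¬ Reaches F i p

theorem mem_forestsOfCard : F ∈ forestsOfCard a k ↔ IsOutForest a F ∧ F.card = k := by
  simp [forestsOfCard]

theorem mem_parentCandidates : p ∈ parentCandidates a F i ↔ 0 < a i p ∧ ¬ Reaches F i p := by
  simp [parentCandidates]

theorem forestWeight_insert (hi : IsRoot F i) :
    forestWeight a (insert (p, i) F) = a i p * forestWeight a F :=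
  prod_insert (hi p)

theorem insert_mem_forestsOfCard_succ (hF : F ∈ forestsOfCard a k) (hi : IsRoot F i)
    (hp : p ∈ parentCandidates a F i) : insert (p, i) F ∈ forestsOfCard a (k + 1) := by
  rw [mem_forestsOfCard] at hF ⊢
  rw [mem_parentCandidates] at hp
  exact ⟨hF.1.insert hp.1 hi hp.2, by rw [card_insert_of_notMem (hi p), hF.2]⟩

theorem exists_eq_insert_of_not_isRoot (hG : G ∈ forestsOfCard a (k + 1)) (hi : ¬ IsRoot G i) :
    ∃ F ∈ forestsOfCard a k, IsRoot F i ∧ ∃ p ∈ parentCandidates a F i, insert (p, i) F = G := by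
  rw [mem_forestsOfCard] at hG
  obtain ⟨q, hq⟩ : ∃ q, (q, i) ∈ G := by simpa [IsRoot] using hi
  refine ⟨G.erase (q, i), ?_, ?_, q, ?_, insert_erase hq⟩
  · rw [mem_forestsOfCard, card_erase_of_mem hq, hG.2]
    exact ⟨hG.1.mono (erase_subset _ _), rfl⟩
  · intro u hu
    exact (mem_erase.mp hu).1 (by rw [hG.1.2.1 u q i (mem_erase.mp hu).2 hq])
  · rw [mem_parentCandidates]
    exact ⟨hG.1.1 _ hq, fun hiq => hG.1.isAcyclic q i hq (hiq.mono (erase_subset _ _))⟩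

theorem eq_of_insert_eq_insert_of_isRoot {F F' : Finset (Fin n × Fin n)} {p p' : Fin n}
    (hF : IsRoot F i) (hF' : IsRoot F' i) (h : insert (p, i) F = insert (p', i) F') :
    p = p' ∧ F = F' := by
  have hp : p = p' := by
    have := h ▸ mem_insert_self (p, i) F
    rcases mem_insert.mp this with he | he
    · exact (Prod.ext_iff.mp he).1
    · exact absurd he (hF' p)
  subst hp
  exact ⟨rfl, by rw [← erase_insert (hF p), h, erase_insert (hF' p)]⟩

open Classical in
theorem sum_forestsOfCard_succ_not_isRoot {M : Type*} [AddCommMonoid M]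
    (f : Finset (Fin n × Fin n) → M) :
    ∑ G ∈ (forestsOfCard a (k + 1)).filter (¬ IsRoot · i), f G
      = ∑ F ∈ (forestsOfCard a k).filter (IsRoot · i),
          ∑ p ∈ parentCandidates a F i, f (insert (p, i) F) := by
  rw [sum_sigma']
  symm
  refine sum_nbij (fun x => insert (x.2, i) x.1) ?_ ?_ ?_ (fun _ _ => rfl)
  · rintro ⟨F, p⟩ hx
    simp only [mem_sigma, mem_filter] at hx
    exact mem_filter.mpr ⟨insert_mem_forestsOfCard_succ hx.1.1 hx.1.2 hx.2,
      fun h => h p (mem_insert_self _ _)⟩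
  · rintro ⟨F, p⟩ hx ⟨F', p'⟩ hx' h
    simp only [mem_coe, mem_sigma, mem_filter] at hx hx'
    obtain ⟨rfl, rfl⟩ := eq_of_insert_eq_insert_of_isRoot hx.1.2 hx'.1.2 h
    rfl
  · intro G hG
    obtain ⟨hG, hi⟩ := mem_filter.mp hG
    obtain ⟨F, hF, hFi, p, hp, rfl⟩ := exists_eq_insert_of_not_isRoot hG hi
    exact ⟨⟨F, p⟩, by simp only [mem_coe, mem_sigma, mem_filter]; exact ⟨⟨hF, hFi⟩, hp⟩, rfl⟩

end Counting

section Recursion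

open Classical

variable {a : Matrix (Fin n) (Fin n) ℝ} {F E : Finset (Fin n × Fin n)} {i j q : Fin n}

noncomputable def treeMatrix (F : Finset (Fin n × Fin n)) : Matrix (Fin n) (Fin n) ℝ :=
  Matrix.of fun x j => if InTreeRootedAt F j x then 1 else 0

theorem kirchhoff_mul_treeMatrix_apply (hnn : ∀ i j, 0 ≤ a i j) (hF : IsOutForest a F) :
    (kirchhoff a * treeMatrix F) i j
      = ∑ p ∈ parentCandidates a F i, a i p * (treeMatrix F i j - treeMatrix F p j) := by
  rw [kirchhoff_mul_apply]
  refine (sum_subset (fun p hp => ?_) fun p _ hp => ?_).symm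
  · rw [mem_erase]
    exact ⟨fun hpi => (mem_parentCandidates.mp hp).2 (hpi ▸ .refl), mem_univ p⟩
  · rw [mem_parentCandidates, not_and_or, not_not] at hp
    rcases hp with hap | hip
    · rw [le_antisymm (not_lt.mp hap) (hnn i p), zero_mul]
    · simp [treeMatrix, hF.inTreeRootedAt_iff_of_reaches hip]

theorem kirchhoff_mul_treeMatrix_apply_of_isRoot (hnn : ∀ i j, 0 ≤ a i j)
    (hF : IsOutForest a F) (hi : IsRoot F i) :
    (kirchhoff a * treeMatrix F) i j
      = ∑ p ∈ parentCandidates a F i, a i p * (1 - treeMatrix (insert (p, i) F)) i j := by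
  rw [kirchhoff_mul_treeMatrix_apply hnn hF]
  refine sum_congr rfl fun p hp => ?_
  simp [treeMatrix, Matrix.one_apply, inTreeRootedAt_iff_eq_of_isRoot hi,
    inTreeRootedAt_insert_self hi (mem_parentCandidates.mp hp).2, eq_comm]

theorem kirchhoff_mul_treeMatrix_insert_apply (hnn : ∀ i j, 0 ≤ a i j) (hE : IsOutForest a E)
    (hi : IsRoot E i) (hq : q ∈ parentCandidates a E i) :
    (kirchhoff a * treeMatrix (insert (q, i) E)) i j
      = ∑ p ∈ parentCandidates a E i, a i p * (treeMatrix E q j - treeMatrix E p j) := by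
  have hiq := (mem_parentCandidates.mp hq).2
  have hcand : parentCandidates a (insert (q, i) E) i = parentCandidates a E i := by
    ext p
    simp only [mem_parentCandidates, reaches_insert_iff_of_not_reaches hiq]
  rw [kirchhoff_mul_treeMatrix_apply hnn (hE.insert (mem_parentCandidates.mp hq).1 hi hiq), hcand]
  refine sum_congr rfl fun p hp => ?_
  simp [treeMatrix, inTreeRootedAt_insert_self hi hiq,
    inTreeRootedAt_insert_of_not_reaches (mem_parentCandidates.mp hp).2]

noncomputable def forestMatrix (a : Matrix (Fin n) (Fin n) ℝ) (k : ℕ) : Matrix (Fin n) (Fin n) ℝ :=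
  ∑ F ∈ forestsOfCard a k, forestWeight a F • treeMatrix F

noncomputable def forestWeightSum (a : Matrix (Fin n) (Fin n) ℝ) (k : ℕ) : ℝ :=
  ∑ F ∈ forestsOfCard a k, forestWeight a F

theorem sum_isRoot_mul_kirchhoff_mul_treeMatrix (hnn : ∀ i j, 0 ≤ a i j) (k : ℕ) (i j : Fin n) :
    ∑ F ∈ (forestsOfCard a k).filter (IsRoot · i),
        forestWeight a F * (kirchhoff a * treeMatrix F) i j
      = ∑ G ∈ (forestsOfCard a (k + 1)).filter (¬ IsRoot · i),
          forestWeight a G * (1 - treeMatrix G) i j := by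
  rw [sum_forestsOfCard_succ_not_isRoot]
  refine sum_congr rfl fun F hF => ?_
  obtain ⟨hF, hi⟩ := mem_filter.mp hF
  rw [kirchhoff_mul_treeMatrix_apply_of_isRoot hnn (mem_forestsOfCard.mp hF).1 hi, mul_sum]
  exact sum_congr rfl fun p _ => by rw [forestWeight_insert hi]; ring

/-- Detaching `i` from its parent `q` and reattaching it to `p` exchanges the roles of `q` and
`p`, so the contributions of forests in which `i` has a parent cancel in pairs. -/
theorem sum_not_isRoot_mul_kirchhoff_mul_treeMatrix (hnn : ∀ i j, 0 ≤ a i j) (k : ℕ)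
    (i j : Fin n) :
    ∑ F ∈ (forestsOfCard a k).filter (¬ IsRoot · i),
        forestWeight a F * (kirchhoff a * treeMatrix F) i j = 0 := by
  cases k with
  | zero =>
    refine sum_eq_zero fun F hF => ?_
    obtain ⟨hF, hi⟩ := mem_filter.mp hF
    rw [mem_forestsOfCard, card_eq_zero] at hF
    exact absurd (hF.2 ▸ fun u => notMem_empty _) hi
  | succ k =>
    rw [sum_forestsOfCard_succ_not_isRoot]
    refine sum_eq_zero fun E hE => ?_
    obtain ⟨hE, hi⟩ := mem_filter.mp hE
    calc ∑ q ∈ parentCandidates a E i, forestWeight a (insert (q, i) E)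
            * (kirchhoff a * treeMatrix (insert (q, i) E)) i j
        = forestWeight a E * ∑ q ∈ parentCandidates a E i, ∑ p ∈ parentCandidates a E i,
            a i q * a i p * (treeMatrix E q j - treeMatrix E p j) := by
          rw [mul_sum]
          refine sum_congr rfl fun q hq => ?_
          rw [forestWeight_insert hi,
            kirchhoff_mul_treeMatrix_insert_apply hnn (mem_forestsOfCard.mp hE).1 hi hq,
            mul_sum, mul_sum]
          exact sum_congr rfl fun p _ => by ring
      _ = 0 := by rw [sum_sum_mul_mul_sub_eq_zero, mul_zero]

theorem sum_isRoot_mul_one_sub_treeMatrix (S : Finset (Finset (Fin n × Fin n))) (i j : Fin n) :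
    ∑ G ∈ S.filter (IsRoot · i), forestWeight a G * (1 - treeMatrix G) i j = 0 := by
  refine sum_eq_zero fun G hG => ?_
  simp [treeMatrix, Matrix.one_apply, inTreeRootedAt_iff_eq_of_isRoot (mem_filter.mp hG).2,
    eq_comm]

theorem forestMatrix_succ_add_kirchhoff_mul (hnn : ∀ i j, 0 ≤ a i j) (k : ℕ) :
    forestMatrix a (k + 1) + kirchhoff a * forestMatrix a k = forestWeightSum a (k + 1) • 1 := by
  rw [← eq_sub_iff_add_eq', forestMatrix, forestMatrix, forestWeightSum, Matrix.mul_sum, sum_smul,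
    ← sum_sub_distrib]
  ext i j
  simp only [Matrix.sum_apply, Matrix.mul_smul, ← smul_sub, Matrix.smul_apply, smul_eq_mul]
  rw [← sum_filter_add_sum_filter_not _ (IsRoot · i),
    ← sum_filter_add_sum_filter_not (forestsOfCard a (k + 1)) (IsRoot · i),
    sum_isRoot_mul_kirchhoff_mul_treeMatrix hnn, sum_not_isRoot_mul_kirchhoff_mul_treeMatrix hnn,
    sum_isRoot_mul_one_sub_treeMatrix, zero_add, add_zero]

end Recursion

section MaximumForests

variable {a : Matrix (Fin n) (Fin n) ℝ} {F : Finset (Fin n × Fin n)}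

theorem isOutForest_empty (a : Matrix (Fin n) (Fin n) ℝ) : IsOutForest a ∅ :=
  ⟨by simp, by simp, fun ⟨_, hf⟩ => notMem_empty _ (hf 0)⟩

theorem bddAbove_forestCards (a : Matrix (Fin n) (Fin n) ℝ) :
    BddAbove {k | ∃ F, IsOutForest a F ∧ F.card = k} := by
  refine ⟨Fintype.card (Fin n × Fin n), ?_⟩
  rintro _ ⟨F, -, rfl⟩
  exact card_le_univ F

theorem exists_isOutForest_card_eq_maxForestSize (a : Matrix (Fin n) (Fin n) ℝ) :
    ∃ F, IsOutForest a F ∧ F.card = maxForestSize a :=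
  Nat.sSup_mem (s := {k | ∃ F, IsOutForest a F ∧ F.card = k}) ⟨0, ∅, isOutForest_empty a, rfl⟩
    (bddAbove_forestCards a)

theorem IsOutForest.card_le_maxForestSize (hF : IsOutForest a F) : F.card ≤ maxForestSize a :=
  le_csSup (bddAbove_forestCards a) ⟨F, hF, rfl⟩

theorem forestsOfCard_maxForestSize_succ (a : Matrix (Fin n) (Fin n) ℝ) :
    forestsOfCard a (maxForestSize a + 1) = ∅ :=
  eq_empty_of_forall_notMem fun F hF => by
    have := (mem_forestsOfCard.mp hF).1.card_le_maxForestSize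
    rw [(mem_forestsOfCard.mp hF).2] at this
    omega

theorem forestMatrix_maxForestSize_succ (a : Matrix (Fin n) (Fin n) ℝ) :
    forestMatrix a (maxForestSize a + 1) = 0 := by
  rw [forestMatrix, forestsOfCard_maxForestSize_succ, sum_empty]

theorem forestWeightSum_maxForestSize_succ (a : Matrix (Fin n) (Fin n) ℝ) :
    forestWeightSum a (maxForestSize a + 1) = 0 := by
  rw [forestWeightSum, forestsOfCard_maxForestSize_succ, sum_empty]

theorem forestWeightSum_maxForestSize_pos (a : Matrix (Fin n) (Fin n) ℝ) :
    0 < forestWeightSum a (maxForestSize a) := by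
  obtain ⟨F, hF, hcard⟩ := exists_isOutForest_card_eq_maxForestSize a
  exact sum_pos (fun G hG => prod_pos fun e he => (mem_forestsOfCard.mp hG).1.1 e he)
    ⟨F, mem_forestsOfCard.mpr ⟨hF, hcard⟩⟩

theorem forestsOfCard_zero (a : Matrix (Fin n) (Fin n) ℝ) : forestsOfCard a 0 = {∅} := by
  ext F
  rw [mem_forestsOfCard, mem_singleton, card_eq_zero]
  exact ⟨And.right, fun h => ⟨h ▸ isOutForest_empty a, h⟩⟩

theorem forestWeightSum_zero (a : Matrix (Fin n) (Fin n) ℝ) : forestWeightSum a 0 = 1 := by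
  simp [forestWeightSum, forestsOfCard_zero, forestWeight]

theorem forestMatrix_zero (a : Matrix (Fin n) (Fin n) ℝ) : forestMatrix a 0 = 1 := by
  have hreach : ∀ x y : Fin n, Reaches ∅ x y ↔ x = y := fun x y =>
    ⟨fun h => h.eq_of_isRoot fun _ => notMem_empty _, by rintro rfl; exact .refl⟩
  ext x j
  simp [forestMatrix, forestsOfCard_zero, forestWeight, treeMatrix, inTreeRootedAt_iff, IsRoot,
    hreach, Matrix.one_apply, eq_comm]

theorem barJ_eq_smul_forestMatrix (a : Matrix (Fin n) (Fin n) ℝ) :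
    barJ a = (forestWeightSum a (maxForestSize a))⁻¹ • forestMatrix a (maxForestSize a) := by
  ext i j
  simp only [barJ, forestMatrix, forestWeightSum, Matrix.of_apply, Matrix.smul_apply,
    Matrix.sum_apply, treeMatrix, smul_eq_mul, mul_ite, mul_one, mul_zero, ← sum_filter,
    div_eq_inv_mul]
  rfl

end MaximumForests

section ForestMatrixLimit

variable {a : Matrix (Fin n) (Fin n) ℝ}

theorem kirchhoff_mul_barJ (hnn : ∀ i j, 0 ≤ a i j) : kirchhoff a * barJ a = 0 := by
  have h := forestMatrix_succ_add_kirchhoff_mul hnn (maxForestSize a)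
  rw [forestMatrix_maxForestSize_succ, forestWeightSum_maxForestSize_succ, zero_smul,
    zero_add] at h
  rw [barJ_eq_smul_forestMatrix, Matrix.mul_smul, h, smul_zero]

theorem exists_one_sub_barJ_eq_kirchhoff_mul (hnn : ∀ i j, 0 ≤ a i j) :
    ∃ C, 1 - barJ a = kirchhoff a * C := by
  have hpos := forestWeightSum_maxForestSize_pos a
  rw [barJ_eq_smul_forestMatrix]
  generalize maxForestSize a = ν at hpos ⊢
  rcases ν with _ | k
  · exact ⟨0, by rw [forestWeightSum_zero, forestMatrix_zero, inv_one, one_smul, sub_self,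
      Matrix.mul_zero]⟩
  · refine ⟨(forestWeightSum a (k + 1))⁻¹ • forestMatrix a k, ?_⟩
    rw [Matrix.mul_smul, eq_sub_of_add_eq' (forestMatrix_succ_add_kirchhoff_mul hnn k), smul_sub,
      smul_smul, inv_mul_cancel₀ hpos.ne', one_smul]

end ForestMatrixLimit

/-- Markov chain tree theorem: the Cesàro limit `P^∞ = lim (1/m) ∑_{i=1}^m P^i`
of the stochastic matrix `P = I − εL` exists and equals the normalized matrix
of maximum out-forests `J̄`. -/
theorem cesaro_limit_eq_barJ {n : ℕ} (hn : 0 < n) (a : Matrix (Fin n) (Fin n) ℝ)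
    (hnn : ∀ i j, 0 ≤ a i j) (ε : ℝ) (hε : 0 < ε)
    (hε' : ε * (Finset.univ.sup' (Finset.univ_nonempty_iff.mpr ⟨⟨0, hn⟩⟩)
      (fun i => ∑ j ∈ Finset.univ.erase i, a i j)) ≤ 1) :
    Filter.Tendsto
      (fun m : ℕ => (m : ℝ)⁻¹ •
        ∑ i ∈ Finset.range m, ((1 : Matrix (Fin n) (Fin n) ℝ) - ε • kirchhoff a) ^ (i + 1))
      Filter.atTop (nhds (barJ a)) := by
  have hP : 1 - ε • kirchhoff a ∈ Matrix.rowStochastic ℝ (Fin n) :=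
    one_sub_smul_kirchhoff_mem_rowStochastic hnn hε.le fun i =>
      (mul_le_mul_of_nonneg_left (le_sup' (fun i => ∑ j ∈ univ.erase i, a i j) (mem_univ i))
        hε.le).trans hε'
  obtain ⟨C, hC⟩ := exists_one_sub_barJ_eq_kirchhoff_mul hnn
  refine tendsto_cesaro_pow_of_mem_rowStochastic hP (C := ε⁻¹ • C) ?_ ?_
  · rw [Matrix.sub_mul, Matrix.one_mul, Matrix.smul_mul, kirchhoff_mul_barJ hnn, smul_zero,
      sub_zero]
  · rw [sub_sub_cancel, Matrix.smul_mul, Matrix.mul_smul, smul_smul, mul_inv_cancel₀ hε.ne',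
      one_smul, hC]
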